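/- arXiv:2605.05387 — 2 statements merged into one kernel-verified Lean document; each statement's English description precedes it below -/
import Mathlib

section
/- Let P⊥ be an orthogonal projection matrix on ℝ^d, let b ∈ ℝ^d satisfy P⊥ b = b, let t > 0, and let μ be a probability measure on ℝ^d with ∫‖z‖ dμ(z) < ∞ such that P⊥ z = b for μ-almost every z. Define p_t(x) = ∫ φ_t(x−z) dμ(z), where φ_t is the density of N(0, tI_d). Then p_t is positive and differentiable, and for all x ∈ ℝ^d, P⊥ · ∇ log p_t(x) = (1/t) · P⊥ (b − x). -/
/-!
Differentiating under the integral sign (the Gaussian and `‖u‖ φ_t(u)` are bounded, so the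
finite measure `μ` dominates them) gives `∇p_t(x) = ∫ φ_t(x - z) (z - x) / t dμ(z)`.
Applying `P⊥` and using `P⊥ z = b` on the support of `μ` turns `z - x` into the constant
`b - P⊥ x`, so the integral collapses to `p_t(x) (b - P⊥ x) / t`; dividing by `p_t(x) > 0`
gives the score identity.
-/

open MeasureTheory Matrix

/-- Identify Euclidean space with the plain function type `ℝ^d`. -/
noncomputable def ofEuc {n : ℕ} (v : EuclideanSpace ℝ (Fin n)) : Fin n → ℝ :=
  WithLp.equiv 2 (Fin n → ℝ) v

/-- The density of the Gaussian distribution `N(0, t I_d)` on `ℝ^d`. -/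
noncomputable def gaussDensity (d : ℕ) (t : ℝ) (u : EuclideanSpace ℝ (Fin d)) : ℝ :=
  (2 * Real.pi * t) ^ (-(d : ℝ) / 2) * Real.exp (-‖u‖ ^ 2 / (2 * t))

open InnerProductSpace

section GaussDensity

variable {d : ℕ} {t : ℝ}

lemma gaussDensity_pos (ht : 0 < t) (u : EuclideanSpace ℝ (Fin d)) :
    0 < gaussDensity d t u := by
  have := Real.pi_pos
  unfold gaussDensity
  positivity

lemma gaussDensity_le (ht : 0 < t) (u : EuclideanSpace ℝ (Fin d)) :
    gaussDensity d t u ≤ (2 * Real.pi * t) ^ (-(d : ℝ) / 2) := by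
  have := Real.pi_pos
  have hexp : Real.exp (-‖u‖ ^ 2 / (2 * t)) ≤ 1 := Real.exp_le_one_iff.2 <|
    div_nonpos_of_nonpos_of_nonneg (neg_nonpos.2 (sq_nonneg _)) (by positivity)
  exact mul_le_of_le_one_right (by positivity) hexp

lemma le_sqrt_mul_exp_sq_div (ht : 0 < t) (r : ℝ) :
    r ≤ Real.sqrt t * Real.exp (r ^ 2 / (2 * t)) := by
  set s := Real.sqrt t
  have hs : 0 < s := Real.sqrt_pos.2 ht
  have hst : s ^ 2 = t := Real.sq_sqrt ht.le
  have hlin : r ≤ s * (1 + r ^ 2 / (2 * t)) := by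
    rw [← hst, mul_add, mul_one, ← sub_nonneg]
    have : s + s * (r ^ 2 / (2 * s ^ 2)) - r = ((r - s) ^ 2 + s ^ 2) / (2 * s) := by
      field_simp; ring
    rw [this]; positivity
  calc r ≤ s * (1 + r ^ 2 / (2 * t)) := hlin
    _ ≤ s * Real.exp (r ^ 2 / (2 * t)) := by
      gcongr; linarith [Real.add_one_le_exp (r ^ 2 / (2 * t))]

lemma gaussDensity_mul_norm_le (ht : 0 < t) (u : EuclideanSpace ℝ (Fin d)) :
    gaussDensity d t u * ‖u‖ ≤ (2 * Real.pi * t) ^ (-(d : ℝ) / 2) * Real.sqrt t := by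
  have := Real.pi_pos
  unfold gaussDensity
  rw [mul_assoc]
  gcongr
  calc Real.exp (-‖u‖ ^ 2 / (2 * t)) * ‖u‖
      ≤ Real.exp (-‖u‖ ^ 2 / (2 * t)) * (Real.sqrt t * Real.exp (‖u‖ ^ 2 / (2 * t))) := by
        gcongr; exact le_sqrt_mul_exp_sq_div ht _
    _ = Real.sqrt t := by
        rw [mul_left_comm, ← Real.exp_add, neg_div, neg_add_cancel, Real.exp_zero, mul_one]

@[fun_prop]
lemma continuous_gaussDensity : Continuous (gaussDensity d t) := by
  unfold gaussDensity
  fun_prop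

lemma hasGradientAt_gaussDensity (u : EuclideanSpace ℝ (Fin d)) :
    HasGradientAt (gaussDensity d t) (-(gaussDensity d t u / t) • u) u := by
  have h := (((hasFDerivAt_id u).norm_sq.const_mul (-(2 * t)⁻¹)).exp).const_mul
    ((2 * Real.pi * t) ^ (-(d : ℝ) / 2))
  have hfun : (fun v => (2 * Real.pi * t) ^ (-(d : ℝ) / 2) *
      Real.exp (-(2 * t)⁻¹ * ‖id v‖ ^ 2)) = gaussDensity d t := by
    funext v
    rw [gaussDensity, id, neg_mul, ← div_eq_inv_mul, ← neg_div]
  rw [hfun] at h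
  rw [hasGradientAt_iff_hasFDerivAt]
  refine h.congr_fderiv ?_
  ext w
  rw [← congrFun hfun u]
  simp
  ring

lemma hasGradientAt_gaussDensity_sub (z x : EuclideanSpace ℝ (Fin d)) :
    HasGradientAt (fun y => gaussDensity d t (y - z))
      ((gaussDensity d t (x - z) / t) • (z - x)) x := by
  have h := (hasGradientAt_gaussDensity (t := t) (x - z)).hasFDerivAt.comp x
    ((hasFDerivAt_id x).sub_const z)
  rw [hasGradientAt_iff_hasFDerivAt]
  refine h.congr_fderiv ?_
  ext w
  simp
  ring

end GaussDensity

noncomputable def heatSmoothing (d : ℕ) (t : ℝ) (μ : Measure (EuclideanSpace ℝ (Fin d)))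
    (x : EuclideanSpace ℝ (Fin d)) : ℝ :=
  ∫ z, gaussDensity d t (x - z) ∂μ

section HeatSmoothing

variable {d : ℕ} {t : ℝ} {μ : Measure (EuclideanSpace ℝ (Fin d))} [IsFiniteMeasure μ]

lemma integrable_gaussDensity_sub (ht : 0 < t) (x : EuclideanSpace ℝ (Fin d)) :
    Integrable (fun z => gaussDensity d t (x - z)) μ := by
  refine (integrable_const ((2 * Real.pi * t) ^ (-(d : ℝ) / 2))).mono'
    (by fun_prop) (.of_forall fun z => ?_)
  rw [Real.norm_of_nonneg (gaussDensity_pos ht _).le]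
  exact gaussDensity_le ht _

lemma heatSmoothing_pos [NeZero μ] (ht : 0 < t) (x : EuclideanSpace ℝ (Fin d)) :
    0 < heatSmoothing d t μ x := by
  rw [heatSmoothing, integral_pos_iff_support_of_nonneg (fun z => (gaussDensity_pos ht _).le)
    (integrable_gaussDensity_sub ht x)]
  have hsupp : Function.support (fun z => gaussDensity d t (x - z)) = Set.univ :=
    Set.eq_univ_of_forall fun z => (gaussDensity_pos ht (x - z)).ne'
  simp [hsupp, NeZero.ne μ]

lemma norm_gaussDensity_smul_sub_le (ht : 0 < t) (x z : EuclideanSpace ℝ (Fin d)) :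
    ‖(gaussDensity d t (x - z) / t) • (z - x)‖ ≤
      (2 * Real.pi * t) ^ (-(d : ℝ) / 2) * Real.sqrt t / t := by
  rw [norm_smul, Real.norm_of_nonneg (div_nonneg (gaussDensity_pos ht _).le ht.le), ← norm_neg,
    neg_sub, div_mul_eq_mul_div]
  exact div_le_div_of_nonneg_right (gaussDensity_mul_norm_le ht _) ht.le

lemma hasGradientAt_heatSmoothing (ht : 0 < t) (x : EuclideanSpace ℝ (Fin d)) :
    HasGradientAt (heatSmoothing d t μ)
      (∫ z, (gaussDensity d t (x - z) / t) • (z - x) ∂μ) x := by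
  have hcont (y : EuclideanSpace ℝ (Fin d)) :
      Continuous fun z => (gaussDensity d t (y - z) / t) • (z - y) := by
    fun_prop
  have hderiv := hasFDerivAt_integral_of_dominated_of_fderiv_le (μ := μ)
    (F' := fun y z => toDual ℝ _ ((gaussDensity d t (y - z) / t) • (z - y)))
    (Metric.ball_mem_nhds x one_pos)
    (.of_forall fun y => (integrable_gaussDensity_sub ht y).aestronglyMeasurable)
    (integrable_gaussDensity_sub ht x)
    ((toDual ℝ _).continuous.comp (hcont x)).aestronglyMeasurable
    (.of_forall fun z y _ => by
      rw [LinearIsometryEquiv.norm_map]; exact norm_gaussDensity_smul_sub_le ht y z)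
    (integrable_const _)
    (.of_forall fun z y _ => (hasGradientAt_gaussDensity_sub z y).hasFDerivAt)
  have hcomm : ∫ z, toDual ℝ _ ((gaussDensity d t (x - z) / t) • (z - x)) ∂μ
      = toDual ℝ _ (∫ z, (gaussDensity d t (x - z) / t) • (z - x) ∂μ) :=
    (toDual ℝ (EuclideanSpace ℝ (Fin d))).toLinearIsometry.integral_comp_comm _
  rw [hcomm] at hderiv
  exact hasGradientAt_iff_hasFDerivAt.2 hderiv

lemma integrable_gaussDensity_smul_sub (ht : 0 < t) (x : EuclideanSpace ℝ (Fin d)) :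
    Integrable (fun z => (gaussDensity d t (x - z) / t) • (z - x)) μ :=
  (integrable_const _).mono' (by fun_prop) (.of_forall (norm_gaussDensity_smul_sub_le ht x))

lemma hasGradientAt_log_heatSmoothing [NeZero μ] (ht : 0 < t)
    (x : EuclideanSpace ℝ (Fin d)) :
    HasGradientAt (fun y => Real.log (heatSmoothing d t μ y))
      ((heatSmoothing d t μ x)⁻¹ • ∫ z, (gaussDensity d t (x - z) / t) • (z - x) ∂μ) x := by
  rw [hasGradientAt_iff_hasFDerivAt]
  refine ((hasGradientAt_heatSmoothing ht x).hasFDerivAt.log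
    (heatSmoothing_pos ht x).ne').congr_fderiv ?_
  simp

lemma map_gradient_log_heatSmoothing [NeZero μ] {F : Type*} [NormedAddCommGroup F]
    [NormedSpace ℝ F] [CompleteSpace F] (ht : 0 < t) (L : EuclideanSpace ℝ (Fin d) →L[ℝ] F)
    (b : F) (hL : ∀ᵐ z ∂μ, L z = b) (x : EuclideanSpace ℝ (Fin d)) :
    L (gradient (fun y => Real.log (heatSmoothing d t μ y)) x) = (1 / t) • (b - L x) := by
  have hp := (heatSmoothing_pos ht (μ := μ) x).ne'
  have hmap : ∫ z, L ((gaussDensity d t (x - z) / t) • (z - x)) ∂μ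
      = ∫ z, (gaussDensity d t (x - z) / t) • (b - L x) ∂μ := by
    refine integral_congr_ae ?_
    filter_upwards [hL] with z hz
    rw [L.map_smul, L.map_sub, hz]
  rw [(hasGradientAt_log_heatSmoothing ht x).gradient, L.map_smul,
    ← L.integral_comp_comm (integrable_gaussDensity_smul_sub ht x), hmap, integral_smul_const,
    integral_div, ← heatSmoothing, smul_smul, inv_mul_eq_div, div_div_cancel_left' hp,
    one_div]

end HeatSmoothing

theorem stmt2_general (d : ℕ) (Pperp : Matrix (Fin d) (Fin d) ℝ)
    (b : Fin d → ℝ) (hb : Pperp.mulVec b = b)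
    (t : ℝ) (ht : 0 < t)
    (μ : Measure (EuclideanSpace ℝ (Fin d))) [IsProbabilityMeasure μ]
    (hsupp : ∀ᵐ z ∂μ, Pperp.mulVec (ofEuc z) = b)
    (pt : EuclideanSpace ℝ (Fin d) → ℝ)
    (hpt : pt = fun x => ∫ z, gaussDensity d t (x - z) ∂μ) :
    (∀ x, 0 < pt x) ∧ Differentiable ℝ pt ∧
      ∀ x, Pperp.mulVec (ofEuc (gradient (fun y => Real.log (pt y)) x))
        = (1 / t) • Pperp.mulVec (b - ofEuc x) := by
  obtain rfl : pt = heatSmoothing d t μ := hpt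
  refine ⟨heatSmoothing_pos ht, fun x => (hasGradientAt_heatSmoothing ht x).differentiableAt,
    fun x => ?_⟩
  let L : EuclideanSpace ℝ (Fin d) →L[ℝ] (Fin d → ℝ) := LinearMap.toContinuousLinearMap
    (Pperp.mulVecLin ∘ₗ (WithLp.linearEquiv 2 ℝ (Fin d → ℝ)).toLinearMap)
  rw [mulVec_sub, hb]
  exact map_gradient_log_heatSmoothing ht L b hsupp x

/-- if `P⊥` is an orthogonal projection matrix, `P⊥ b = b`, `t > 0`, and
`μ` is a probability measure with finite first moment supported on `{z : P⊥ z = b}`,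
then the heat-kernel smoothing `p_t(x) = ∫ φ_t(x−z) dμ(z)` is positive and
differentiable and its score satisfies `P⊥ ∇ log p_t(x) = (1/t) P⊥ (b − x)`. -/
theorem stmt2 (d : ℕ) (Pperp : Matrix (Fin d) (Fin d) ℝ)
    (hproj : Pperp * Pperp = Pperp) (hsymm : Pperpᵀ = Pperp)
    (b : Fin d → ℝ) (hb : Pperp.mulVec b = b)
    (t : ℝ) (ht : 0 < t)
    (μ : Measure (EuclideanSpace ℝ (Fin d))) [IsProbabilityMeasure μ]
    (hmom : Integrable (fun z => ‖z‖) μ)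
    (hsupp : ∀ᵐ z ∂μ, Pperp.mulVec (ofEuc z) = b)
    (pt : EuclideanSpace ℝ (Fin d) → ℝ)
    (hpt : pt = fun x => ∫ z, gaussDensity d t (x - z) ∂μ) :
    (∀ x, 0 < pt x) ∧ Differentiable ℝ pt ∧
      ∀ x, Pperp.mulVec (ofEuc (gradient (fun y => Real.log (pt y)) x))
        = (1 / t) • Pperp.mulVec (b - ofEuc x) :=
  stmt2_general d Pperp b hb t ht μ hsupp pt hpt
end

section
/- Let R be a nonnegative random variable, let δ > 0, σ > 0, and H ∈ ℝ. Assume that P(0 < R < δ) = 0 and that for every r > 0, P(R ≥ r) ≤ (1/2) exp( H − r²/(8σ²) ). Then E[R²] ≤ ( δ²/2 + 4σ² ) · exp( H − δ²/(8σ²) ). -/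
open MeasureTheory

lemma tail_exp_integral (a c H : ℝ) (hc : 0 < c) :
    ∫ t in Set.Ioi a, Real.exp (H - t / c) = c * Real.exp (H - a / c) := by
  have h1 : ∀ t : ℝ, Real.exp (H - t / c) = Real.exp H * Real.exp (-(c⁻¹ * t)) := by
    intro t
    rw [← Real.exp_add]
    congr 1
    ring
  simp_rw [h1]
  rw [integral_const_mul]
  have := integral_comp_mul_left_Ioi (fun x => Real.exp (-x)) a (inv_pos.mpr hc)
  simp only [smul_eq_mul, inv_inv] at this
  rw [this, integral_exp_neg_Ioi, ← mul_assoc, mul_comm (Real.exp H) c, mul_assoc,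
    ← Real.exp_add]

lemma tail_exp_lintegral (a c H : ℝ) (hc : 0 < c) :
    ∫⁻ t in Set.Ioi a, ENNReal.ofReal ((1 / 2) * Real.exp (H - t / c))
      = ENNReal.ofReal ((1 / 2) * (c * Real.exp (H - a / c))) := by
  have hint : IntegrableOn (fun t => (1 / 2 : ℝ) * Real.exp (H - t / c)) (Set.Ioi a) := by
    have h1 : ∀ t : ℝ, (1 / 2 : ℝ) * Real.exp (H - t / c)
        = ((1 / 2) * Real.exp H) * Real.exp (-c⁻¹ * t) := by
      intro t
      rw [mul_assoc, ← Real.exp_add]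
      congr 2
      ring
    simp_rw [h1]
    exact (exp_neg_integrableOn_Ioi a (inv_pos.mpr hc)).const_mul _
  rw [← ofReal_integral_eq_lintegral_ofReal hint
    (Filter.Eventually.of_forall fun t => by positivity)]
  rw [MeasureTheory.integral_const_mul, tail_exp_integral a c H hc]

/-- layer-cake second-moment bound: let `R ≥ 0` be a random variable
with `P(0 < R < δ) = 0` and tail bound `P(R ≥ r) ≤ (1/2) exp(H − r²/(8σ²))` for all
`r > 0`. Then `E[R²] ≤ (δ²/2 + 4σ²) exp(H − δ²/(8σ²))`. -/
theorem stmt18 {Ω : Type*} [MeasurableSpace Ω] (P : Measure Ω) [IsProbabilityMeasure P]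
    (R : Ω → ℝ) (hRmeas : Measurable R) (hRnonneg : ∀ ω, 0 ≤ R ω)
    (δ σ H : ℝ) (hδ : 0 < δ) (hσ : 0 < σ)
    (hgap : P {ω | 0 < R ω ∧ R ω < δ} = 0)
    (htail : ∀ r : ℝ, 0 < r →
      (P {ω | r ≤ R ω}).toReal ≤ (1 / 2) * Real.exp (H - r ^ 2 / (8 * σ ^ 2))) :
    ∫ ω, R ω ^ 2 ∂P ≤ (δ ^ 2 / 2 + 4 * σ ^ 2) * Real.exp (H - δ ^ 2 / (8 * σ ^ 2)) := by
  set c : ℝ := 8 * σ ^ 2 with hc_def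
  have hc : 0 < c := by positivity
  set C : ℝ := (1 / 2) * Real.exp (H - δ ^ 2 / c) with hC_def
  have hC : 0 ≤ C := by positivity
  have hδ2 : (0 : ℝ) < δ ^ 2 := by positivity
  -- Small t bound
  have hsmall : ∀ t ∈ Set.Ioc (0 : ℝ) (δ ^ 2),
      P {ω | t ≤ R ω ^ 2} ≤ ENNReal.ofReal C := by
    intro t ht
    have hsub : {ω | t ≤ R ω ^ 2} ⊆ {ω | δ ≤ R ω} ∪ {ω | 0 < R ω ∧ R ω < δ} := by
      intro ω hω
      have hRpos : 0 < R ω := by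
        by_contra h
        push_neg at h
        have : R ω = 0 := le_antisymm h (hRnonneg ω)
        simp only [Set.mem_setOf_eq, this] at hω
        nlinarith [ht.1]
      by_cases h : δ ≤ R ω
      · exact Or.inl h
      · exact Or.inr ⟨hRpos, lt_of_not_ge h⟩
    calc P {ω | t ≤ R ω ^ 2} ≤ P ({ω | δ ≤ R ω} ∪ {ω | 0 < R ω ∧ R ω < δ}) :=
            measure_mono hsub
      _ ≤ P {ω | δ ≤ R ω} + P {ω | 0 < R ω ∧ R ω < δ} := measure_union_le _ _
      _ = P {ω | δ ≤ R ω} := by rw [hgap, add_zero]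
      _ ≤ ENNReal.ofReal C := by
          rw [ENNReal.le_ofReal_iff_toReal_le (measure_ne_top P _) hC]
          exact htail δ hδ
  -- Large t bound
  have hlarge : ∀ t ∈ Set.Ioi (δ ^ 2),
      P {ω | t ≤ R ω ^ 2} ≤ ENNReal.ofReal ((1 / 2) * Real.exp (H - t / c)) := by
    intro t ht
    have htpos : (0 : ℝ) < t := lt_trans hδ2 ht
    have hsub : {ω | t ≤ R ω ^ 2} ⊆ {ω | Real.sqrt t ≤ R ω} := by
      intro ω hω
      have := Real.sqrt_le_sqrt hω
      rwa [Real.sqrt_sq (hRnonneg ω)] at this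
    have hsq : Real.sqrt t ^ 2 = t := Real.sq_sqrt htpos.le
    calc P {ω | t ≤ R ω ^ 2} ≤ P {ω | Real.sqrt t ≤ R ω} := measure_mono hsub
      _ ≤ ENNReal.ofReal ((1 / 2) * Real.exp (H - t / c)) := by
          rw [ENNReal.le_ofReal_iff_toReal_le (measure_ne_top P _) (by positivity)]
          have := htail (Real.sqrt t) (Real.sqrt_pos.mpr htpos)
          rwa [hsq] at this
  -- Layer cake
  have hlayer : ∫⁻ ω, ENNReal.ofReal (R ω ^ 2) ∂P
      = ∫⁻ t in Set.Ioi (0 : ℝ), P {ω | t ≤ R ω ^ 2} := by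
    exact lintegral_eq_lintegral_meas_le P
      (Filter.Eventually.of_forall fun ω => by positivity)
      ((hRmeas.pow_const 2).aemeasurable)
  have hRHS : 0 ≤ (δ ^ 2 / 2 + 4 * σ ^ 2) * Real.exp (H - δ ^ 2 / (8 * σ ^ 2)) := by
    positivity
  rw [integral_eq_lintegral_of_nonneg_ae
    (Filter.Eventually.of_forall fun ω => by positivity)
    ((hRmeas.pow_const 2).aestronglyMeasurable)]
  apply ENNReal.toReal_le_of_le_ofReal hRHS
  rw [hlayer]
  have hsplit : Set.Ioi (0 : ℝ) = Set.Ioc (0 : ℝ) (δ ^ 2) ∪ Set.Ioi (δ ^ 2) :=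
    (Set.Ioc_union_Ioi_eq_Ioi hδ2.le).symm
  rw [hsplit, lintegral_union measurableSet_Ioi (Set.Ioc_disjoint_Ioi le_rfl)]
  have h1 : ∫⁻ t in Set.Ioc (0 : ℝ) (δ ^ 2), P {ω | t ≤ R ω ^ 2}
      ≤ ENNReal.ofReal C * ENNReal.ofReal (δ ^ 2) := by
    calc ∫⁻ t in Set.Ioc (0 : ℝ) (δ ^ 2), P {ω | t ≤ R ω ^ 2}
        ≤ ∫⁻ _ in Set.Ioc (0 : ℝ) (δ ^ 2), ENNReal.ofReal C :=
          setLIntegral_mono' measurableSet_Ioc hsmall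
      _ = ENNReal.ofReal C * volume (Set.Ioc (0 : ℝ) (δ ^ 2)) := setLIntegral_const _ _
      _ = ENNReal.ofReal C * ENNReal.ofReal (δ ^ 2) := by
          rw [Real.volume_Ioc, sub_zero]
  have h2 : ∫⁻ t in Set.Ioi (δ ^ 2), P {ω | t ≤ R ω ^ 2}
      ≤ ENNReal.ofReal ((1 / 2) * (c * Real.exp (H - δ ^ 2 / c))) := by
    calc ∫⁻ t in Set.Ioi (δ ^ 2), P {ω | t ≤ R ω ^ 2}
        ≤ ∫⁻ t in Set.Ioi (δ ^ 2), ENNReal.ofReal ((1 / 2) * Real.exp (H - t / c)) :=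
          setLIntegral_mono' measurableSet_Ioi hlarge
      _ = ENNReal.ofReal ((1 / 2) * (c * Real.exp (H - δ ^ 2 / c))) :=
          tail_exp_lintegral (δ ^ 2) c H hc
  calc _ ≤ ENNReal.ofReal C * ENNReal.ofReal (δ ^ 2)
        + ENNReal.ofReal ((1 / 2) * (c * Real.exp (H - δ ^ 2 / c))) := add_le_add h1 h2
    _ = ENNReal.ofReal ((δ ^ 2 / 2 + 4 * σ ^ 2) * Real.exp (H - δ ^ 2 / (8 * σ ^ 2))) := by
        rw [← ENNReal.ofReal_mul hC, ← ENNReal.ofReal_add (by positivity) (by positivity)]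
        congr 1
        rw [hC_def, hc_def]
        ring
end
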